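/- arXiv:2605.22713 — 2 statements merged into one kernel-verified Lean document; each statement's English description precedes it below -/
import Mathlib

section
/- Let M ⊆ B(H) be a non-degenerate von Neumann algebra, ψ ∈ H a unit vector, and R a contraction in M_d ⊗ M. Then the following are equivalent: (i) (R, ψ) is a monopartite exact embezzlement protocol for α in (M, H), i.e., ⟨(R i 0)* X (R j 0) ψ, ψ⟩ = (if i = j then (α i)^2 else 0) · ⟨X ψ, ψ⟩ for all X ∈ M and all i, j ∈ Fin d; (ii) there exists a contraction T whose blocks T i j lie in the commutant M' such that (R, T, ψ) is a bipartite exact embezzlement protocol for α in (M, M', H), i.e., (R i 0)(T j 0) ψ = (if i = j then α i else 0) • ψ for all i, j ∈ Fin d. -/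
open scoped InnerProductSpace
open ContinuousLinearMap

/-- The block operator on `ℓ²(Fin d; H)` associated with a `d × d` matrix of operators on `H`,
acting by `(R x) i = ∑ j, (R i j) (x j)`. -/
noncomputable def blockOp {H : Type*} [NormedAddCommGroup H] [InnerProductSpace ℂ H] {d : ℕ}
    (R : Fin d → Fin d → H →L[ℂ] H) :
    (PiLp 2 fun _ : Fin d => H) →L[ℂ] (PiLp 2 fun _ : Fin d => H) :=
  (((PiLp.continuousLinearEquiv 2 ℂ (fun _ : Fin d => H)).symm :
      (∀ _ : Fin d, H) →L[ℂ] (PiLp 2 fun _ : Fin d => H))) ∘L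
    (ContinuousLinearMap.pi fun i => ∑ j, (R i j) ∘L (ContinuousLinearMap.proj j)) ∘L
    (((PiLp.continuousLinearEquiv 2 ℂ (fun _ : Fin d => H)) :
      (PiLp 2 fun _ : Fin d => H) →L[ℂ] (∀ _ : Fin d, H)))

variable {H : Type*} [NormedAddCommGroup H] [InnerProductSpace ℂ H] [CompleteSpace H]

/-- `R` is a contraction in `M_d ⊗ M`: all blocks lie in `M` and the block operator on
`ℓ²(Fin d; H)` has operator norm at most `1`. -/
def IsContractionIn (M : VonNeumannAlgebra H) {d : ℕ}
    (R : Fin d → Fin d → H →L[ℂ] H) : Prop :=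
  (∀ i j, R i j ∈ M) ∧ ‖blockOp R‖ ≤ 1

/-- A bipartite exact embezzlement protocol for `α` in `(M, M', H)`: `R` is a contraction in
`M_d ⊗ M`, `T` is a contraction with blocks in the commutant `M'`, `ψ` is a unit vector, and
`(R i 0)(T j 0) ψ = δ_{ij} α i • ψ` for all `i, j`. -/
def BipartiteProtocol (M : VonNeumannAlgebra H) {d : ℕ} [NeZero d] (α : Fin d → ℝ)
    (R T : Fin d → Fin d → H →L[ℂ] H) (ψ : H) : Prop :=
  IsContractionIn M R ∧ IsContractionIn M.commutant T ∧ ‖ψ‖ = 1 ∧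
    ∀ i j, (R i 0) ((T j 0) ψ) = (if i = j then (α i : ℂ) else 0) • ψ

/-- A monopartite exact embezzlement protocol for `α` in `(M, H)`: `R` is a contraction in
`M_d ⊗ M`, `ψ` is a unit vector, and `⟨(R i 0)* X (R j 0) ψ, ψ⟩ = δ_{ij} (α i)² ⟨X ψ, ψ⟩`
for all `X ∈ M` and all `i, j`. -/
def MonopartiteProtocol (M : VonNeumannAlgebra H) {d : ℕ} [NeZero d] (α : Fin d → ℝ)
    (R : Fin d → Fin d → H →L[ℂ] H) (ψ : H) : Prop :=
  IsContractionIn M R ∧ ‖ψ‖ = 1 ∧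
    ∀ X ∈ M, ∀ i j : Fin d,
      ⟪(adjoint (R i 0)) (X ((R j 0) ψ)), ψ⟫_ℂ
        = (if i = j then ((α i : ℂ)) ^ 2 else 0) * ⟪X ψ, ψ⟫_ℂ

/-- The orthogonal projection of `H` onto the closure of `{Y ψ : Y ∈ S}`, as an operator
on `H`. -/
noncomputable def suppProjOn (S : Set (H →L[ℂ] H)) (ψ : H) : H →L[ℂ] H :=
  letI K := (Submodule.span ℂ ((fun Y : H →L[ℂ] H => Y ψ) '' S)).topologicalClosure
  K.subtypeL ∘L (K.orthogonalProjectionOnto : H →L[ℂ] K)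

/-- The support projection of the state `⟨· ψ, ψ⟩` on `M`: the orthogonal projection onto
the closure of `M' ψ`. -/
noncomputable def suppP (M : VonNeumannAlgebra H) (ψ : H) : H →L[ℂ] H :=
  suppProjOn (M.commutant : Set (H →L[ℂ] H)) ψ

/-- The support projection of the state `⟨· ψ, ψ⟩` on `M'`: the orthogonal projection onto
the closure of `M ψ`. -/
noncomputable def suppP' (M : VonNeumannAlgebra H) (ψ : H) : H →L[ℂ] H :=
  suppProjOn (M : Set (H →L[ℂ] H)) ψ

/-
Bipartite ⇒ monopartite. Write `t k = T k 0`. The column `(t k)` is a contraction, and each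
`t k ψ` has norm at least `α k`, since `R i 0 (t k ψ) = δᵢₖ α k ψ` and the column `(R i 0)` is a
contraction. As `∑ α k ^ 2 = 1`, the column is isometric at `ψ`, hence `∑ (t k)* t k ψ = ψ`.
Inserting this operator from `M'` between `X (R j 0 ψ)` and `R i 0 ψ`, and moving `t k` past
`X (R j 0)` and `R i 0`, gives the monopartite identity.

Monopartite ⇒ bipartite. The monopartite identity says `⟪X wⱼ, Y wᵢ⟫ = δᵢⱼ ⟪X ψ, Y ψ⟫` for
`wⱼ = (α j)⁻¹ R j 0 ψ` and `X, Y ∈ M`, so `X ψ ↦ X wⱼ` is a well-defined isometry on `M ψ`.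
Extended by continuity and by zero on `(M ψ)ᗮ` it becomes a partial isometry `S j ∈ M'`, and
the `S j` have mutually orthogonal ranges. Then `t j = (S j)*` forms a column contraction in
`M'` with `t j (R i 0 ψ) = δᵢⱼ α i ψ`, and `R i 0` commutes with `t j`.
-/

section Orthogonal
variable {𝕜 E F : Type*} [RCLike 𝕜] [NormedAddCommGroup E] [InnerProductSpace 𝕜 E]
  [CompleteSpace E] [NormedAddCommGroup F] [InnerProductSpace 𝕜 F]

theorem Submodule.dense_sup_orthogonal (K : Submodule 𝕜 E) :
    Dense ((K ⊔ Kᗮ : Submodule 𝕜 E) : Set E) := by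
  rw [Submodule.dense_iff_topologicalClosure_eq_top, Submodule.topologicalClosure_eq_top_iff,
    ← Submodule.inf_orthogonal, Submodule.inf_orthogonal_eq_bot]

theorem ContinuousLinearMap.ext_of_eqOn_orthogonal {K : Submodule 𝕜 E} {f g : E →L[𝕜] F}
    (h : ∀ v ∈ K, f v = g v) (h' : ∀ v ∈ Kᗮ, f v = g v) : f = g := by
  refine ContinuousLinearMap.ext_on (s := K ∪ Kᗮ) ?_ ?_
  · rw [Submodule.span_union, Submodule.span_eq, Submodule.span_eq]
    exact K.dense_sup_orthogonal
  · rintro v (hv | hv)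
    exacts [h v hv, h' v hv]

theorem Submodule.exists_extension_eq_zero_on_orthogonal [CompleteSpace F] (K : Submodule 𝕜 E)
    (ℓ : K →L[𝕜] F) : ∃ S : E →L[𝕜] F, ‖S‖ ≤ ‖ℓ‖ ∧ (∀ v : K, S v = ℓ v) ∧ ∀ u ∈ Kᗮ, S u = 0 := by
  set L := K.topologicalClosure
  let ι : K →L[𝕜] L := (Submodule.inclusion K.le_topologicalClosure).mkContinuous 1 fun v => by
    simp
  have hι : DenseRange ι :=
    (denseRange_inclusion_iff K.le_topologicalClosure).2 (by rw [Submodule.topologicalClosure_coe])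
  have hιnorm : ∀ v, ‖ι v‖ = ‖v‖ := fun v => rfl
  have hιsometry : Isometry ι := AddMonoidHomClass.isometry_of_norm ι hιnorm
  refine ⟨ℓ.extend ι ∘L L.orthogonalProjectionOnto, ?_, fun v => ?_, fun u hu => ?_⟩
  · calc ‖ℓ.extend ι ∘L L.orthogonalProjectionOnto‖
        ≤ ‖ℓ.extend ι‖ * ‖L.orthogonalProjectionOnto‖ := opNorm_comp_le _ _
      _ ≤ ‖ℓ.extend ι‖ * 1 := by gcongr; exact L.orthogonalProjectionOnto_norm_le
      _ ≤ 1 * ‖ℓ‖ := by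
          rw [mul_one]
          exact ℓ.opNorm_extend_le (N := 1) hι fun v => by simp [hιnorm]
      _ = ‖ℓ‖ := one_mul _
  · have : L.orthogonalProjectionOnto (v : E) = ι v :=
      L.orthogonalProjectionOnto_mem_subspace_eq_self (ι v)
    rw [comp_apply, this, ℓ.extend_eq hι hιsometry.isUniformInducing]
  · rw [comp_apply, L.orthogonalProjectionOnto_apply_of_mem_orthogonal
      (by rwa [Submodule.orthogonal_closure]), map_zero]

theorem LinearMap.exists_comp_eq_of_norm_le {V : Type*} [AddCommGroup V] [Module 𝕜 V]
    [CompleteSpace F] (f : V →ₗ[𝕜] E) (g : V →ₗ[𝕜] F) {C : ℝ} (hC : 0 ≤ C)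
    (h : ∀ x, ‖g x‖ ≤ C * ‖f x‖) :
    ∃ S : E →L[𝕜] F, ‖S‖ ≤ C ∧ (∀ x, S (f x) = g x) ∧ ∀ u ∈ (LinearMap.range f)ᗮ, S u = 0 := by
  have hker : LinearMap.ker f ≤ LinearMap.ker g := fun x hx =>
    norm_le_zero_iff.1 (by simpa [LinearMap.mem_ker.1 hx] using h x)
  let ℓ : LinearMap.range f →ₗ[𝕜] F := (LinearMap.ker f).liftQ g hker ∘ₗ f.quotKerEquivRange.symm
  have hℓ : ∀ x, ℓ ⟨f x, LinearMap.mem_range_self f x⟩ = g x := fun x => by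
    simp [ℓ, LinearMap.quotKerEquivRange_symm_apply_image]
  have hbound : ∀ y, ‖ℓ y‖ ≤ C * ‖y‖ := by
    rintro ⟨_, x, rfl⟩
    exact (hℓ x).symm ▸ h x
  obtain ⟨S, hSnorm, hSℓ, hS0⟩ :=
    (LinearMap.range f).exists_extension_eq_zero_on_orthogonal (ℓ.mkContinuous C hbound)
  refine ⟨S, hSnorm.trans (LinearMap.mkContinuous_norm_le _ hC _), fun x => ?_, hS0⟩
  exact (hSℓ ⟨f x, LinearMap.mem_range_self f x⟩).trans (hℓ x)

end Orthogonal

section Column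
variable {𝕜 ι E F : Type*} [RCLike 𝕜] [NormedAddCommGroup E] [InnerProductSpace 𝕜 E]
  [NormedAddCommGroup F] [InnerProductSpace 𝕜 F]

noncomputable def columnOp (t : ι → E →L[𝕜] F) : E →L[𝕜] PiLp 2 (fun _ : ι => F) :=
  ((PiLp.continuousLinearEquiv 2 𝕜 (fun _ : ι => F)).symm : (ι → F) →L[𝕜] PiLp 2 _) ∘L
    ContinuousLinearMap.pi t

@[simp]
theorem columnOp_apply (t : ι → E →L[𝕜] F) (v : E) (k : ι) : columnOp t v k = t k v := rfl

variable [Fintype ι]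

theorem norm_columnOp_apply_sq (t : ι → E →L[𝕜] F) (v : E) :
    ‖columnOp t v‖ ^ 2 = ∑ k, ‖t k v‖ ^ 2 := by
  simp [PiLp.norm_sq_eq_of_L2]

theorem norm_sum_sq_of_pairwise_inner_eq_zero (v : ι → E)
    (h : Pairwise fun k l => ⟪v k, v l⟫_𝕜 = 0) : ‖∑ k, v k‖ ^ 2 = ∑ k, ‖v k‖ ^ 2 := by
  classical
  have : ⟪∑ k, v k, ∑ k, v k⟫_𝕜 = ∑ k, ⟪v k, v k⟫_𝕜 := by
    simp_rw [sum_inner, inner_sum]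
    exact Finset.sum_congr rfl fun k _ =>
      Finset.sum_eq_single k (fun l _ hlk => h (Ne.symm hlk)) (by simp)
  simp_rw [inner_self_eq_norm_sq_to_K] at this
  exact_mod_cast this

variable [CompleteSpace E] [CompleteSpace F]

theorem adjoint_columnOp_apply (t : ι → E →L[𝕜] F) (x : PiLp 2 fun _ : ι => F) :
    adjoint (columnOp t) x = ∑ k, adjoint (t k) (x k) := by
  refine ext_inner_right 𝕜 fun v => ?_
  simp [adjoint_inner_left, sum_inner, PiLp.inner_apply]

theorem norm_columnOp_adjoint_le_one (S : ι → E →L[𝕜] F) (hS : ∀ k, ‖S k‖ ≤ 1)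
    (horth : Pairwise fun k l => ∀ a b, ⟪S k a, S l b⟫_𝕜 = 0) :
    ‖columnOp fun k => adjoint (S k)‖ ≤ 1 := by
  rw [← LinearIsometryEquiv.norm_map adjoint]
  refine opNorm_le_bound _ zero_le_one fun x => ?_
  rw [adjoint_columnOp_apply, one_mul]
  simp only [adjoint_adjoint]
  have hpyth : ‖∑ k, S k (x k)‖ ^ 2 = ∑ k, ‖S k (x k)‖ ^ 2 :=
    norm_sum_sq_of_pairwise_inner_eq_zero (𝕜 := 𝕜) _ fun k l hkl => horth hkl _ _
  have : ‖∑ k, S k (x k)‖ ^ 2 ≤ ‖x‖ ^ 2 := by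
    rw [hpyth, PiLp.norm_sq_eq_of_L2]
    exact Finset.sum_le_sum fun k _ => by
      gcongr
      exact (le_opNorm _ _).trans (mul_le_of_le_one_left (norm_nonneg _) (hS k))
  exact le_of_sq_le_sq this (norm_nonneg _)

theorem adjoint_apply_apply_eq_self_of_norm_apply_eq {C : E →L[𝕜] F} (hC : ‖C‖ ≤ 1) {x : E}
    (hx : ‖C x‖ = ‖x‖) : adjoint C (C x) = x := by
  have hinner : ⟪adjoint C (C x), x⟫_𝕜 = (‖x‖ : 𝕜) ^ 2 := by
    rw [adjoint_inner_left, inner_self_eq_norm_sq_to_K, hx]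
  have hnorm : ‖adjoint C (C x)‖ ≤ ‖x‖ :=
    calc ‖adjoint C (C x)‖ ≤ ‖adjoint C‖ * ‖C x‖ := le_opNorm _ _
      _ ≤ 1 * ‖x‖ := by rw [LinearIsometryEquiv.norm_map, hx]; gcongr
      _ = ‖x‖ := one_mul _
  have : ‖adjoint C (C x) - x‖ ^ 2 ≤ 0 := by
    rw [@norm_sub_sq 𝕜, hinner, ← RCLike.ofReal_pow, RCLike.ofReal_re]
    nlinarith [norm_nonneg (adjoint C (C x))]
  rw [← sub_eq_zero, ← norm_eq_zero]
  exact pow_eq_zero_iff two_ne_zero |>.1 (le_antisymm this (sq_nonneg _))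

end Column

section Block
variable {E : Type*} [NormedAddCommGroup E] [InnerProductSpace ℂ E] {d : ℕ}

theorem blockOp_apply (R : Fin d → Fin d → E →L[ℂ] E) (x : PiLp 2 fun _ : Fin d => E) (i : Fin d) :
    blockOp R x i = ∑ j, R i j (x j) := by
  simp [blockOp]

theorem norm_columnOp_le_norm_blockOp (R : Fin d → Fin d → E →L[ℂ] E) (j : Fin d) :
    ‖columnOp fun i => R i j‖ ≤ ‖blockOp R‖ := by
  classical
  refine opNorm_le_bound _ (norm_nonneg (blockOp R)) fun v => ?_
  have : columnOp (fun i => R i j) v = blockOp R (PiLp.single 2 j v) := by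
    ext i
    simp [blockOp_apply, apply_ite (R i _)]
  rw [this, ← PiLp.norm_single 2 (fun _ => E) j v]
  exact le_opNorm _ _

theorem norm_blockOp_column_le (t : Fin d → E →L[ℂ] E) (j : Fin d) :
    ‖blockOp fun i k => if k = j then t i else 0‖ ≤ ‖columnOp t‖ := by
  refine opNorm_le_bound _ (norm_nonneg (columnOp t)) fun x => ?_
  have : blockOp (fun i k => if k = j then t i else 0) x = columnOp t (x j) := by
    ext i
    rw [blockOp_apply, Finset.sum_eq_single j (fun k _ hk => by simp [hk]) (by simp)]
    simp
  rw [this]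
  exact (le_opNorm _ _).trans (by gcongr; exact PiLp.norm_apply_le x j)

end Block

section Cyclic
variable {M : VonNeumannAlgebra H} {ψ : H}

theorem apply_comm_of_mem_commutant {T X : H →L[ℂ] H} (hT : T ∈ M.commutant) (hX : X ∈ M)
    (v : H) : T (X v) = X (T v) :=
  congr($(VonNeumannAlgebra.mem_commutant_iff.1 hT X hX) v).symm

variable (M) in
noncomputable def evalAt (v : H) : M.toStarSubalgebra →ₗ[ℂ] H :=
  (ContinuousLinearMap.apply ℂ H v).toLinearMap ∘ₗ M.toStarSubalgebra.subtype.toLinearMap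

variable (M ψ) in
noncomputable def cyclicSubspace : Submodule ℂ H := LinearMap.range (evalAt M ψ)

theorem mem_cyclicSubspace {v : H} : v ∈ cyclicSubspace M ψ ↔ ∃ X ∈ M, X ψ = v := by
  simp [cyclicSubspace, evalAt]

theorem apply_mem_orthogonal_cyclicSubspace {X : H →L[ℂ] H} (hX : X ∈ M) {u : H}
    (hu : u ∈ (cyclicSubspace M ψ)ᗮ) : X u ∈ (cyclicSubspace M ψ)ᗮ := by
  rw [Submodule.mem_orthogonal] at hu ⊢
  rintro _ ⟨Y, rfl⟩
  rw [← adjoint_inner_left]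
  exact hu _ (mem_cyclicSubspace.2 ⟨adjoint X * Y, mul_mem (star_mem hX) Y.2, rfl⟩)

variable (M ψ) in
theorem ext_cyclicSubspace {F : Type*} [NormedAddCommGroup F] [InnerProductSpace ℂ F]
    {f g : H →L[ℂ] F} (h : ∀ X ∈ M, f (X ψ) = g (X ψ))
    (h' : ∀ u ∈ (cyclicSubspace M ψ)ᗮ, f u = g u) : f = g :=
  ext_of_eqOn_orthogonal (fun _ hv => by
    obtain ⟨X, hX, rfl⟩ := mem_cyclicSubspace.1 hv
    exact h X hX) h'

variable {S : H →L[ℂ] H} {w : H}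

theorem mem_commutant_of_apply_eq (hS : ∀ X ∈ M, S (X ψ) = X w)
    (hS0 : ∀ u ∈ (cyclicSubspace M ψ)ᗮ, S u = 0) : S ∈ M.commutant := by
  refine VonNeumannAlgebra.mem_commutant_iff.2 fun X hX => ext_cyclicSubspace M ψ ?_ ?_
  · intro Y hY
    simp only [mul_apply_eq_comp]
    rw [← mul_apply_eq_comp X Y, hS _ (mul_mem hX hY), hS _ hY, mul_apply_eq_comp]
  · intro u hu
    simp [hS0 u hu, hS0 _ (apply_mem_orthogonal_cyclicSubspace hX hu)]

theorem inner_apply_apply_eq_zero {S' : H →L[ℂ] H} {w' : H} (hS : ∀ X ∈ M, S (X ψ) = X w)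
    (hS0 : ∀ u ∈ (cyclicSubspace M ψ)ᗮ, S u = 0) (hS' : ∀ X ∈ M, S' (X ψ) = X w')
    (hS0' : ∀ u ∈ (cyclicSubspace M ψ)ᗮ, S' u = 0)
    (horth : ∀ X ∈ M, ∀ Y ∈ M, ⟪X w, Y w'⟫_ℂ = 0) (a b : H) : ⟪S a, S' b⟫_ℂ = 0 := by
  have h₁ : ∀ X ∈ M, innerSL ℂ (S (X ψ)) ∘L S' = 0 := fun X hX =>
    ext_cyclicSubspace M ψ (fun Y hY => by simp [hS X hX, hS' Y hY, horth X hX Y hY])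
      (fun u hu => by simp [hS0' u hu])
  have h₂ : innerSL ℂ (S' b) ∘L S = 0 :=
    ext_cyclicSubspace M ψ
      (fun X hX => by
        simpa [inner_eq_zero_symm] using congr($(h₁ X hX) b))
      (fun u hu => by simp [hS0 u hu])
  simpa [inner_eq_zero_symm] using congr($h₂ a)

theorem adjoint_apply_eq_of_inner_eq {z z' : H} (hS : ∀ X ∈ M, S (X ψ) = X w)
    (hS0 : ∀ u ∈ (cyclicSubspace M ψ)ᗮ, S u = 0) (hz' : z' ∈ cyclicSubspace M ψ)
    (h : ∀ X ∈ M, ⟪z, X w⟫_ℂ = ⟪z', X ψ⟫_ℂ) : adjoint S z = z' := by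
  have : innerSL ℂ z ∘L S = innerSL ℂ z' :=
    ext_cyclicSubspace M ψ (fun X hX => by simp [hS X hX, h X hX])
      (fun u hu => by simp [hS0 u hu, Submodule.inner_right_of_mem_orthogonal hz' hu])
  exact ext_inner_right ℂ fun v => by simpa [adjoint_inner_left] using congr($this v)

end Cyclic

section Protocol
variable {d : ℕ} [NeZero d] {M : VonNeumannAlgebra H} {α : Fin d → ℝ}
  {R : Fin d → Fin d → H →L[ℂ] H} {ψ : H}

theorem MonopartiteProtocol.inner_apply_eq (hm : MonopartiteProtocol M α R ψ)
    {X Y : H →L[ℂ] H} (hX : X ∈ M) (hY : Y ∈ M) (i j : Fin d) :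
    ⟪X (R j 0 ψ), Y (R i 0 ψ)⟫_ℂ = (if i = j then (α i : ℂ) ^ 2 else 0) * ⟪X ψ, Y ψ⟫_ℂ := by
  have hYX : adjoint Y * X ∈ M := mul_mem (star_mem hY) hX
  rw [← adjoint_inner_left, ← mul_apply_eq_comp, ← adjoint_inner_left, hm.2.2 _ hYX,
    mul_apply_eq_comp, adjoint_inner_left]

theorem MonopartiteProtocol.inner_apply_smul_eq (hm : MonopartiteProtocol M α R ψ)
    (hα : ∀ i, α i ≠ 0) ⦃X Y : H →L[ℂ] H⦄ (hX : X ∈ M) (hY : Y ∈ M) (i j : Fin d) :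
    ⟪X ((α j : ℂ)⁻¹ • R j 0 ψ), Y ((α i : ℂ)⁻¹ • R i 0 ψ)⟫_ℂ =
      if i = j then ⟪X ψ, Y ψ⟫_ℂ else 0 := by
  rw [map_smul, map_smul, inner_smul_left, inner_smul_right, hm.inner_apply_eq hX hY]
  split_ifs with hij
  · subst hij
    have : (α i : ℂ) ≠ 0 := Complex.ofReal_ne_zero.2 (hα i)
    simp only [map_inv₀, Complex.conj_ofReal]
    field_simp
  · simp

theorem MonopartiteProtocol.norm_apply_smul_eq (hm : MonopartiteProtocol M α R ψ)
    (hα : ∀ i, α i ≠ 0) {X : H →L[ℂ] H} (hX : X ∈ M) (j : Fin d) :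
    ‖X ((α j : ℂ)⁻¹ • R j 0 ψ)‖ = ‖X ψ‖ := by
  have h := hm.inner_apply_smul_eq hα hX hX j j
  rw [if_pos rfl, inner_self_eq_norm_sq_to_K, inner_self_eq_norm_sq_to_K] at h
  exact (pow_left_inj₀ (norm_nonneg _) (norm_nonneg _) two_ne_zero).1 (by exact_mod_cast h)

theorem MonopartiteProtocol.exists_commutant_column (hm : MonopartiteProtocol M α R ψ)
    (hα : ∀ i, α i ≠ 0) :
    ∃ t : Fin d → H →L[ℂ] H, (∀ j, t j ∈ M.commutant) ∧ ‖columnOp t‖ ≤ 1 ∧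
      ∀ i j, R i 0 (t j ψ) = (if i = j then (α i : ℂ) else 0) • ψ := by
  set w : Fin d → H := fun j => (α j : ℂ)⁻¹ • R j 0 ψ
  have hw : ∀ ⦃X Y⦄, X ∈ M → Y ∈ M → ∀ i j,
      ⟪X (w j), Y (w i)⟫_ℂ = if i = j then ⟪X ψ, Y ψ⟫_ℂ else 0 :=
    hm.inner_apply_smul_eq hα
  have hnorm : ∀ j (X : M.toStarSubalgebra), ‖X.1 (w j)‖ ≤ 1 * ‖X.1 ψ‖ := fun j X => by
    rw [one_mul]
    exact (hm.norm_apply_smul_eq hα X.2 j).le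
  choose S hSnorm hS hS0 using fun j =>
    (evalAt M ψ).exists_comp_eq_of_norm_le (evalAt M (w j)) zero_le_one (hnorm j)
  have hSw : ∀ j, ∀ X ∈ M, S j (X ψ) = X (w j) := fun j X hX => hS j ⟨X, hX⟩
  have hSmem : ∀ j, S j ∈ M.commutant := fun j => mem_commutant_of_apply_eq (hSw j) (hS0 j)
  have horth : Pairwise fun k l => ∀ a b, ⟪S k a, S l b⟫_ℂ = 0 := fun k l hkl =>
    inner_apply_apply_eq_zero (hSw k) (hS0 k) (hSw l) (hS0 l) fun X hX Y hY => by
      rw [hw hX hY, if_neg (Ne.symm hkl)]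
  have hadj : ∀ i j, adjoint (S j) (R i 0 ψ) = (if i = j then (α i : ℂ) else 0) • ψ :=
    fun i j => adjoint_apply_eq_of_inner_eq (hSw j) (hS0 j)
      (Submodule.smul_mem _ _ (mem_cyclicSubspace.2 ⟨1, one_mem M, rfl⟩)) fun X hX => by
        have hRw : R i 0 ψ = (α i : ℂ) • (1 : H →L[ℂ] H) (w i) := by
          simp [w, smul_smul, hα i]
        rw [hRw, inner_smul_left, hw (one_mem M) hX j i]
        by_cases hij : i = j
        · simp [hij]
        · simp [hij, Ne.symm hij]
  refine ⟨fun j => adjoint (S j), fun j => ?_, norm_columnOp_adjoint_le_one S hSnorm horth,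
    fun i j => ?_⟩
  · simpa only [star_eq_adjoint] using star_mem (hSmem j)
  · show R i 0 (adjoint (S j) ψ) = _
    rw [← star_eq_adjoint, ← apply_comm_of_mem_commutant (star_mem (hSmem j)) (hm.1.1 i 0),
      star_eq_adjoint, hadj]

theorem MonopartiteProtocol.exists_bipartiteProtocol (hm : MonopartiteProtocol M α R ψ)
    (hα : ∀ i, α i ≠ 0) : ∃ T, BipartiteProtocol M α R T ψ := by
  obtain ⟨t, ht, htnorm, hRt⟩ := hm.exists_commutant_column hα
  refine ⟨fun i k => if k = 0 then t i else 0, hm.1,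
    ⟨fun i k => ?_, (norm_blockOp_column_le t 0).trans htnorm⟩, hm.2.1,
    fun i j => by simpa using hRt i j⟩
  by_cases hk : k = 0
  · simpa [hk] using ht i
  · simp [hk, zero_mem]

end Protocol

section Bipartite
variable {d : ℕ} [NeZero d] {M : VonNeumannAlgebra H} {α : Fin d → ℝ}
  {R T : Fin d → Fin d → H →L[ℂ] H} {ψ : H}

theorem BipartiteProtocol.sum_adjoint_apply_apply_eq_self (hb : BipartiteProtocol M α R T ψ)
    (hsum : ∑ i, α i ^ 2 = 1) : ∑ k, adjoint (T k 0) (T k 0 ψ) = ψ := by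
  obtain ⟨hR, hT, hψ, hp⟩ := hb
  have hcolR := (norm_columnOp_le_norm_blockOp R 0).trans hR.2
  have hcolT := (norm_columnOp_le_norm_blockOp T 0).trans hT.2
  have hlower : ∀ k, α k ^ 2 ≤ ‖T k 0 ψ‖ ^ 2 := fun k => by
    have hRk : ‖columnOp (fun i => R i 0) (T k 0 ψ)‖ ^ 2 = α k ^ 2 := by
      simp [norm_columnOp_apply_sq, hp, norm_smul, hψ, apply_ite]
    rw [← hRk]
    gcongr
    simpa using (columnOp fun i => R i 0).le_of_opNorm_le hcolR (T k 0 ψ)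
  have hiso : ‖columnOp (fun k => T k 0) ψ‖ = ‖ψ‖ := by
    refine le_antisymm (by simpa using (columnOp fun k => T k 0).le_of_opNorm_le hcolT ψ) ?_
    rw [← pow_le_pow_iff_left₀ (norm_nonneg _) (norm_nonneg _) two_ne_zero,
      norm_columnOp_apply_sq, hψ, one_pow, ← hsum]
    exact Finset.sum_le_sum fun k _ => hlower k
  simpa [adjoint_columnOp_apply] using adjoint_apply_apply_eq_self_of_norm_apply_eq hcolT hiso

theorem BipartiteProtocol.monopartiteProtocol (hb : BipartiteProtocol M α R T ψ)
    (hsum : ∑ i, α i ^ 2 = 1) : MonopartiteProtocol M α R ψ := by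
  have hfix := hb.sum_adjoint_apply_apply_eq_self hsum
  obtain ⟨hR, hT, hψ, hp⟩ := hb
  refine ⟨hR, hψ, fun X hX i j => ?_⟩
  have hXR : X * R j 0 ∈ M := mul_mem hX (hR.1 j 0)
  have hTk : ∀ k, T k 0 ∈ M.commutant := fun k => hT.1 k 0
  have hXRψ : (X * R j 0) ψ = ∑ k, adjoint (T k 0) (T k 0 ((X * R j 0) ψ)) := by
    conv_lhs => rw [← hfix]
    simp only [map_sum, ← star_eq_adjoint, apply_comm_of_mem_commutant (star_mem (hTk _)) hXR,
      apply_comm_of_mem_commutant (hTk _) hXR]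
  calc ⟪adjoint (R i 0) (X (R j 0 ψ)), ψ⟫_ℂ
      = ∑ k, ⟪T k 0 ((X * R j 0) ψ), T k 0 (R i 0 ψ)⟫_ℂ := by
        rw [adjoint_inner_left, ← mul_apply_eq_comp]
        conv_lhs => rw [hXRψ, sum_inner]
        simp only [adjoint_inner_left]
    _ = ∑ k, ⟪X (R j 0 (T k 0 ψ)), R i 0 (T k 0 ψ)⟫_ℂ := by
        simp_rw [apply_comm_of_mem_commutant (hTk _) hXR,
          apply_comm_of_mem_commutant (hTk _) (hR.1 i 0), mul_apply_eq_comp]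
    _ = (if i = j then (α i : ℂ) ^ 2 else 0) * ⟪X ψ, ψ⟫_ℂ := by
        rw [Finset.sum_eq_single j (fun k _ hkj => by simp [hp, Ne.symm hkj]) (by simp)]
        by_cases hij : i = j
        · subst hij
          simp only [hp, ↓reduceIte, map_smul, inner_smul_left, inner_smul_right,
            Complex.conj_ofReal]
          ring
        · simp [hp, hij]

end Bipartite

theorem monopartite_iff_bipartite_general
    {H : Type*} [NormedAddCommGroup H] [InnerProductSpace ℂ H] [CompleteSpace H]
    (M : VonNeumannAlgebra H) {d : ℕ} [NeZero d]
    (α : Fin d → ℝ) (hα : ∀ i, 0 < α i) (hsum : ∑ i, (α i) ^ 2 = 1)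
    (R : Fin d → Fin d → H →L[ℂ] H) (ψ : H) :
    MonopartiteProtocol M α R ψ ↔
      ∃ T : Fin d → Fin d → H →L[ℂ] H, BipartiteProtocol M α R T ψ :=
  ⟨fun hm => hm.exists_bipartiteProtocol fun i => (hα i).ne',
    fun ⟨_, hb⟩ => hb.monopartiteProtocol hsum⟩

/-- A contraction `R` in `M_d ⊗ M` together with a unit vector `ψ` is a monopartite exact
embezzlement protocol for `α` in `(M, H)` if and only if there is a contraction `T` with
blocks in the commutant `M'` such that `(R, T, ψ)` is a bipartite exact embezzlement
protocol for `α` in `(M, M', H)`. -/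
theorem monopartite_iff_bipartite
    {H : Type*} [NormedAddCommGroup H] [InnerProductSpace ℂ H] [CompleteSpace H]
    (M : VonNeumannAlgebra H) {d : ℕ} [NeZero d] (hd : 2 ≤ d)
    (α : Fin d → ℝ) (hα : ∀ i, 0 < α i) (hsum : ∑ i, (α i) ^ 2 = 1)
    (R : Fin d → Fin d → H →L[ℂ] H) (ψ : H) :
    MonopartiteProtocol M α R ψ ↔
      ∃ T : Fin d → Fin d → H →L[ℂ] H, BipartiteProtocol M α R T ψ :=
  monopartite_iff_bipartite_general M α hα hsum R ψ
end

section
/- Let M ⊆ B(H) be a von Neumann algebra and let (R, T, ψ) be a bipartite exact embezzlement protocol for α in (M, M', H). For a list μ = [μ₁, …, μ_m] over Fin d write R_μ = (R μ₁ 0) ∘ ⋯ ∘ (R μ_m 0) and T_μ = (T μ₁ 0) ∘ ⋯ ∘ (T μ_m 0), with empty products equal to 1, and α_μ = ∏ₖ α_{μₖ} (α_[] = 1). Then for all lists μ, ν over Fin d: (R_μ)* R_ν ψ = (α_ν / α_μ) • (T_ν)* T_μ ψ and (T_μ)* T_ν ψ = (α_ν / α_μ) • (R_ν)* R_μ ψ.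 -/
/-!
Since `‖R i 0‖ ≤ 1`, the relation `(R i 0)(T i 0) ψ = α i • ψ` forces `α i ≤ ‖(T i 0) ψ‖`, and
the column of the contraction `T` gives `∑ i, ‖(T i 0) ψ‖² ≤ 1 = ∑ i, (α i)²`; hence
`‖(T i 0) ψ‖ = α i`. So `R i 0` does not shrink `(T i 0) ψ`, and for a contraction this means
`(R i 0)* (R i 0) (T i 0) ψ = (T i 0) ψ`, i.e. `(T i 0) ψ = α i • (R i 0)* ψ`. As `R` and `T` play
symmetric roles, also `(R i 0) ψ = α i • (T i 0)* ψ`. Operators of `M` commute with those of `M'`,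
so these one-letter relations extend letter by letter to `R_ν ψ = α_ν • (T_ν)* ψ` and
`T_μ ψ = α_μ • (R_μ)* ψ`, and then
`(R_μ)* R_ν ψ = α_ν • (T_ν)* (R_μ)* ψ = (α_ν / α_μ) • (T_ν)* T_μ ψ`.
-/

open scoped InnerProductSpace
open ContinuousLinearMap

variable {H : Type*} [NormedAddCommGroup H] [InnerProductSpace ℂ H] [CompleteSpace H]

section Contraction

variable {𝕜 E F : Type*} [RCLike 𝕜] [NormedAddCommGroup E] [InnerProductSpace 𝕜 E]
  [CompleteSpace E] [NormedAddCommGroup F] [InnerProductSpace 𝕜 F] [CompleteSpace F]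

theorem adjoint_apply_apply_of_norm_apply_eq {A : E →L[𝕜] F} (hA : ‖A‖ ≤ 1) {v : E}
    (hv : ‖A v‖ = ‖v‖) : adjoint A (A v) = v := by
  have hle : ‖adjoint A (A v)‖ ≤ ‖v‖ :=
    calc ‖adjoint A (A v)‖ ≤ ‖adjoint A‖ * ‖A v‖ := (adjoint A).le_opNorm _
      _ ≤ 1 * ‖v‖ := by rw [LinearIsometryEquiv.norm_map, hv]; gcongr
      _ = ‖v‖ := one_mul _
  have hre : RCLike.re ⟪adjoint A (A v), v⟫_𝕜 = ‖v‖ ^ 2 := by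
    rw [adjoint_inner_left, ← hv, ← inner_self_eq_norm_sq (𝕜 := 𝕜)]
  have hsq : ‖adjoint A (A v) - v‖ ^ 2 ≤ 0 := by
    rw [norm_sub_sq (𝕜 := 𝕜), hre]
    nlinarith [norm_nonneg (adjoint A (A v)), norm_nonneg v]
  exact sub_eq_zero.mp (norm_eq_zero.mp (pow_eq_zero_iff two_ne_zero |>.mp
    (le_antisymm hsq (sq_nonneg _))))

end Contraction

section BlockOp

variable {H : Type*} [NormedAddCommGroup H] [InnerProductSpace ℂ H] {d : ℕ}

theorem sum_norm_sq_apply_le_of_norm_blockOp_le_one {R : Fin d → Fin d → H →L[ℂ] H}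
    (hR : ‖blockOp R‖ ≤ 1) (j : Fin d) (x : H) : ∑ i, ‖R i j x‖ ^ 2 ≤ ‖x‖ ^ 2 := by
  set v : PiLp 2 (fun _ : Fin d => H) := WithLp.toLp 2 (Pi.single j x)
  have hv : ‖v‖ ^ 2 = ‖x‖ ^ 2 := by
    rw [PiLp.norm_sq_eq_of_L2, Finset.sum_eq_single j (fun k _ hk => by simp [v, hk]) (by simp)]
    simp [v]
  have hRv : ‖blockOp R v‖ ^ 2 = ∑ i, ‖R i j x‖ ^ 2 := by
    rw [PiLp.norm_sq_eq_of_L2]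
    refine Finset.sum_congr rfl fun i _ => ?_
    change ‖(∑ k, R i k ∘L proj k) (Pi.single j x)‖ ^ 2 = _
    rw [sum_apply, Finset.sum_eq_single j (fun k _ hk => by simp [hk]) (by simp)]
    simp
  rw [← hRv, ← hv]
  gcongr
  simpa using (blockOp R).le_opNorm v |>.trans (mul_le_of_le_one_left (norm_nonneg v) hR)

theorem norm_le_one_of_norm_blockOp_le_one {R : Fin d → Fin d → H →L[ℂ] H}
    (hR : ‖blockOp R‖ ≤ 1) (i j : Fin d) : ‖R i j‖ ≤ 1 := by
  refine opNorm_le_bound _ zero_le_one fun x => ?_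
  have hcol : ‖R i j x‖ ^ 2 ≤ ‖x‖ ^ 2 :=
    (Finset.single_le_sum (fun k _ => sq_nonneg ‖R k j x‖) (Finset.mem_univ i)).trans
      (sum_norm_sq_apply_le_of_norm_blockOp_le_one hR j x)
  rw [one_mul]
  exact pow_le_pow_iff_left₀ (norm_nonneg _) (norm_nonneg _) two_ne_zero |>.mp hcol

end BlockOp

theorem eq_of_le_of_sum_sq_le {ι : Type*} {s : Finset ι} {a b : ι → ℝ}
    (ha : ∀ i ∈ s, 0 ≤ a i) (hab : ∀ i ∈ s, a i ≤ b i)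
    (hsum : ∑ i ∈ s, b i ^ 2 ≤ ∑ i ∈ s, a i ^ 2) : ∀ i ∈ s, a i = b i := by
  have hsq : ∀ i ∈ s, a i ^ 2 ≤ b i ^ 2 := fun i hi => pow_le_pow_left₀ (ha i hi) (hab i hi) 2
  have heq := (Finset.sum_eq_sum_iff_of_le hsq).mp (le_antisymm (Finset.sum_le_sum hsq) hsum)
  intro i hi
  exact (pow_left_inj₀ (ha i hi) ((ha i hi).trans (hab i hi)) two_ne_zero).mp (heq i hi)

namespace VonNeumannAlgebra

variable {M : VonNeumannAlgebra H}

theorem apply_comm_of_mem_commutant {A B : H →L[ℂ] H} (hA : A ∈ M) (hB : B ∈ M.commutant)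
    (x : H) : A (B x) = B (A x) :=
  DFunLike.congr_fun (mem_commutant_iff.mp hB A hA) x

variable {ι : Type*} {A B : ι → H →L[ℂ] H} {c : ι → ℂ} {ψ : H}

theorem adjoint_list_prod_map_mem (hA : ∀ i, A i ∈ M) (l : List ι) :
    adjoint (l.map A).prod ∈ M := by
  rw [← star_eq_adjoint]
  exact star_mem (list_prod_mem (by simpa using fun i _ => hA i))

theorem list_prod_map_apply_eq_smul_adjoint (hA : ∀ i, A i ∈ M) (hB : ∀ i, B i ∈ M.commutant)
    (h : ∀ i, A i ψ = c i • adjoint (B i) ψ) (l : List ι) :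
    (l.map A).prod ψ = (l.map c).prod • adjoint (l.map B).prod ψ := by
  induction l with
  | nil => simp [← star_eq_adjoint]
  | cons j l ih =>
    calc (A j * (l.map A).prod) ψ
        = (l.map c).prod • adjoint (l.map B).prod (A j ψ) := by
          rw [mul_apply_eq_comp, ih, map_smul,
            apply_comm_of_mem_commutant (hA j) (adjoint_list_prod_map_mem hB l)]
      _ = (c j * (l.map c).prod) • adjoint (B j * (l.map B).prod) ψ := by
          rw [h j, map_smul, smul_smul, mul_comm]
          simp only [← star_eq_adjoint, star_mul, mul_apply_eq_comp]

theorem adjoint_list_prod_map_apply_list_prod_map_apply (hA : ∀ i, A i ∈ M)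
    (hB : ∀ i, B i ∈ M.commutant) (hc : ∀ i, c i ≠ 0)
    (hAB : ∀ i, A i ψ = c i • adjoint (B i) ψ) (hBA : ∀ i, B i ψ = c i • adjoint (A i) ψ)
    (μ ν : List ι) :
    adjoint (μ.map A).prod ((ν.map A).prod ψ)
      = ((ν.map c).prod / (μ.map c).prod) • adjoint (ν.map B).prod ((μ.map B).prod ψ) := by
  have hAμ : adjoint (μ.map A).prod ψ = (μ.map c).prod⁻¹ • (μ.map B).prod ψ := by
    have hA' : ∀ i, A i ∈ M.commutant.commutant := by rwa [commutant_commutant]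
    rw [list_prod_map_apply_eq_smul_adjoint hB hA' hBA μ,
      inv_smul_smul₀ (List.prod_ne_zero (by simpa using fun i _ => hc i))]
  rw [list_prod_map_apply_eq_smul_adjoint hA hB hAB ν, map_smul,
    apply_comm_of_mem_commutant (adjoint_list_prod_map_mem hA μ)
      (adjoint_list_prod_map_mem hB ν), hAμ, map_smul, smul_smul, div_eq_mul_inv]

end VonNeumannAlgebra

namespace BipartiteProtocol

variable {M : VonNeumannAlgebra H} {d : ℕ} [NeZero d] {α : Fin d → ℝ}
  {R T : Fin d → Fin d → H →L[ℂ] H} {ψ : H}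

theorem symm (h : BipartiteProtocol M α R T ψ) : BipartiteProtocol M.commutant α T R ψ := by
  obtain ⟨hR, hT, hψ, hRT⟩ := h
  refine ⟨hT, by rwa [VonNeumannAlgebra.commutant_commutant], hψ, fun i j => ?_⟩
  rw [← VonNeumannAlgebra.apply_comm_of_mem_commutant (hR.1 j 0) (hT.1 i 0), hRT]
  rcases eq_or_ne i j with rfl | hij
  · rfl
  · simp [hij, hij.symm]

theorem norm_apply_eq (h : BipartiteProtocol M α R T ψ) (hα : ∀ i, 0 ≤ α i)
    (hsum : ∑ i, α i ^ 2 = 1) (i : Fin d) : ‖T i 0 ψ‖ = α i := by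
  obtain ⟨⟨-, hR⟩, ⟨-, hT⟩, hψ, hRT⟩ := h
  have hle : ∀ i, α i ≤ ‖T i 0 ψ‖ := fun i =>
    calc α i = ‖R i 0 (T i 0 ψ)‖ := by simp [hRT, norm_smul, hψ, abs_of_nonneg (hα i)]
      _ ≤ ‖R i 0‖ * ‖T i 0 ψ‖ := le_opNorm _ _
      _ ≤ ‖T i 0 ψ‖ :=
        mul_le_of_le_one_left (norm_nonneg _) (norm_le_one_of_norm_blockOp_le_one hR i 0)
  have hcol : ∑ i, ‖T i 0 ψ‖ ^ 2 ≤ ∑ i, α i ^ 2 := by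
    simpa [hψ, hsum] using sum_norm_sq_apply_le_of_norm_blockOp_le_one hT 0 ψ
  exact (eq_of_le_of_sum_sq_le (fun i _ => hα i) (fun i _ => hle i) hcol i
    (Finset.mem_univ i)).symm

theorem apply_eq_smul_adjoint_apply (h : BipartiteProtocol M α R T ψ) (hα : ∀ i, 0 ≤ α i)
    (hsum : ∑ i, α i ^ 2 = 1) (i : Fin d) : T i 0 ψ = (α i : ℂ) • adjoint (R i 0) ψ := by
  have hnorm := h.norm_apply_eq hα hsum i
  obtain ⟨⟨-, hR⟩, -, hψ, hRT⟩ := h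
  have hfix := adjoint_apply_apply_of_norm_apply_eq (norm_le_one_of_norm_blockOp_le_one hR i 0)
    (v := T i 0 ψ) (by
      rw [hnorm, hRT]
      simp [norm_smul, hψ, abs_of_nonneg (hα i)])
  rwa [hRT, if_pos rfl, map_smul, eq_comm] at hfix

end BipartiteProtocol

theorem switching_words_between_players_general
    {H : Type*} [NormedAddCommGroup H] [InnerProductSpace ℂ H] [CompleteSpace H]
    (M : VonNeumannAlgebra H) {d : ℕ} [NeZero d]
    (α : Fin d → ℝ) (hα : ∀ i, 0 < α i) (hsum : ∑ i, (α i) ^ 2 = 1)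
    (R T : Fin d → Fin d → H →L[ℂ] H) (ψ : H)
    (hproto : BipartiteProtocol M α R T ψ) :
    ∀ μ ν : List (Fin d),
      (adjoint ((μ.map (fun i => R i 0)).prod)) (((ν.map (fun i => R i 0)).prod) ψ)
          = ((((ν.map α).prod / (μ.map α).prod : ℝ)) : ℂ) •
            (adjoint ((ν.map (fun i => T i 0)).prod)) (((μ.map (fun i => T i 0)).prod) ψ) ∧
      (adjoint ((μ.map (fun i => T i 0)).prod)) (((ν.map (fun i => T i 0)).prod) ψ)
          = ((((ν.map α).prod / (μ.map α).prod : ℝ)) : ℂ) •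
            (adjoint ((ν.map (fun i => R i 0)).prod)) (((μ.map (fun i => R i 0)).prod) ψ) := by
  intro μ ν
  have hα₀ : ∀ i, 0 ≤ α i := fun i => (hα i).le
  have hc : ∀ i, (α i : ℂ) ≠ 0 := fun i => Complex.ofReal_ne_zero.mpr (hα i).ne'
  have hRT := hproto.symm.apply_eq_smul_adjoint_apply hα₀ hsum
  have hTR := hproto.apply_eq_smul_adjoint_apply hα₀ hsum
  have hR : ∀ i, R i 0 ∈ M := fun i => hproto.1.1 i 0
  have hT : ∀ i, T i 0 ∈ M.commutant := fun i => hproto.2.1.1 i 0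
  have hR' : ∀ i, R i 0 ∈ M.commutant.commutant := by
    rwa [VonNeumannAlgebra.commutant_commutant]
  have hcast : ∀ l : List (Fin d), (((l.map α).prod : ℝ) : ℂ) = (l.map fun i => (α i : ℂ)).prod :=
    fun l => by simpa [Function.comp_def] using map_list_prod Complex.ofRealHom (l.map α)
  rw [Complex.ofReal_div, hcast, hcast]
  exact ⟨VonNeumannAlgebra.adjoint_list_prod_map_apply_list_prod_map_apply hR hT hc hRT hTR μ ν,
    VonNeumannAlgebra.adjoint_list_prod_map_apply_list_prod_map_apply hT hR' hc hTR hRT μ ν⟩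

/-- If `(R, T, ψ)` is a bipartite exact embezzlement protocol for `α`, then for all words
`μ, ν` over `Fin d`, with `R_μ = (R μ₁ 0) ⋯ (R μ_m 0)`, `T_μ = (T μ₁ 0) ⋯ (T μ_m 0)` and
`α_μ = ∏ₖ α_{μₖ}`: `(R_μ)* R_ν ψ = (α_ν / α_μ) • (T_ν)* T_μ ψ` and
`(T_μ)* T_ν ψ = (α_ν / α_μ) • (R_ν)* R_μ ψ`. -/
theorem switching_words_between_players
    {H : Type*} [NormedAddCommGroup H] [InnerProductSpace ℂ H] [CompleteSpace H]
    (M : VonNeumannAlgebra H) {d : ℕ} [NeZero d] (hd : 2 ≤ d)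
    (α : Fin d → ℝ) (hα : ∀ i, 0 < α i) (hsum : ∑ i, (α i) ^ 2 = 1)
    (R T : Fin d → Fin d → H →L[ℂ] H) (ψ : H)
    (hproto : BipartiteProtocol M α R T ψ) :
    ∀ μ ν : List (Fin d),
      (adjoint ((μ.map (fun i => R i 0)).prod)) (((ν.map (fun i => R i 0)).prod) ψ)
          = ((((ν.map α).prod / (μ.map α).prod : ℝ)) : ℂ) •
            (adjoint ((ν.map (fun i => T i 0)).prod)) (((μ.map (fun i => T i 0)).prod) ψ) ∧
      (adjoint ((μ.map (fun i => T i 0)).prod)) (((ν.map (fun i => T i 0)).prod) ψ)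
          = ((((ν.map α).prod / (μ.map α).prod : ℝ)) : ℂ) •
            (adjoint ((ν.map (fun i => R i 0)).prod)) (((μ.map (fun i => R i 0)).prod) ψ) :=
  switching_words_between_players_general M α hα hsum R T ψ hproto
end
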